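/- arXiv:2301.01643 — 13 statements merged into one kernel-verified Lean document; each statement's English description precedes it below -/
import Mathlib

section
/- Let X be a semigroup and γ : X → X a map. The map s(x,y) = (xy, γ(y)) is a solution of the pentagon equation on X (i.e., θ_x := γ satisfies (P1) and (P2)) if and only if γ is a semigroup endomorphism with γ² = γ. -/
theorem stmt_1 {X : Type*} [Semigroup X] (γ : X → X) :
    (let θ : X → X → X := fun _ y => γ y
     (∀ x y z : X, θ x y * θ (x * y) z = θ x (y * z)) ∧
     (∀ x y z : X, θ (θ x y) (θ (x * y) z) = θ y z)) ↔
    ((∀ x y : X, γ (x * y) = γ x * γ y) ∧ (∀ x : X, γ (γ x) = γ x)) := by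
  simp only []
  constructor
  · rintro ⟨h1, h2⟩
    exact ⟨fun x y => (h1 x x y).symm, fun x => h2 x x x⟩
  · rintro ⟨h1, h2⟩
    exact ⟨fun x y z => (h1 y z).symm, fun x y z => h2 z⟩
end

section
/- Let X be a semigroup, e, f idempotents of X with e ≤ f (meaning ef = fe = e), and s(x,y) = (xy, θ_x(y)) a solution of the pentagon equation on X. Then θ_e(f) is an idempotent of X. -/
theorem stmt_5 {X : Type*} [Semigroup X] (θ : X → X → X)
    (hP1 : ∀ x y z : X, θ x y * θ (x * y) z = θ x (y * z))
    (hP2 : ∀ x y z : X, θ (θ x y) (θ (x * y) z) = θ y z)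
    (e f : X) (he : e * e = e) (hf : f * f = f)
    (hef : e * f = e) (hfe : f * e = e) :
    θ e f * θ e f = θ e f := by
  have h := hP1 e f f
  rwa [hef, hf] at h
end

section
/- Let X be a semigroup, e, f idempotents with ef = fe = e, and s(x,y) = (xy, θ_x(y)) a solution of the pentagon equation on X. Then θ_e(e)·θ_e(f) = θ_e(f)·θ_e(e) = θ_e(e), i.e., θ_e(e) ≤ θ_e(f) in the natural partial order on idempotents. -/
theorem stmt_6 {X : Type*} [Semigroup X] (θ : X → X → X)
    (hP1 : ∀ x y z : X, θ x y * θ (x * y) z = θ x (y * z))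
    (hP2 : ∀ x y z : X, θ (θ x y) (θ (x * y) z) = θ y z)
    (e f : X) (he : e * e = e) (hf : f * f = f)
    (hef : e * f = e) (hfe : f * e = e) :
    θ e e * θ e f = θ e e ∧ θ e f * θ e e = θ e e := by
  constructor
  · have h := hP1 e e f
    rwa [he, hef] at h
  · have h := hP1 e f e
    rwa [hef, hfe] at h
end

section
/- Let X be a semigroup, e an idempotent, and s(x,y) = (xy, θ_x(y)) a solution of the pentagon equation. If x ∈ X satisfies xe = x, then θ_x(e) is an idempotent of X. -/
theorem stmt_7 {X : Type*} [Semigroup X] (θ : X → X → X)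
    (hP1 : ∀ x y z : X, θ x y * θ (x * y) z = θ x (y * z))
    (hP2 : ∀ x y z : X, θ (θ x y) (θ (x * y) z) = θ y z)
    (e x : X) (he : e * e = e) (hx : x * e = x) :
    θ x e * θ x e = θ x e := by
  have := hP1 x e e
  rwa [hx, he] at this
end

section
/- Let M be a monoid with identity 1 and s(x,y) = (xy, θ_x(y)) a solution of the pentagon equation on M. Then for every x ∈ M: (a) θ_x(1) is idempotent; (b) θ_1 = θ_{θ_x(1)} ∘ θ_x; (c) θ_x = θ_{θ_1(x)} ∘ θ_x. -/
theorem stmt_9 {M : Type*} [Monoid M] (θ : M → M → M)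
    (hP1 : ∀ x y z : M, θ x y * θ (x * y) z = θ x (y * z))
    (hP2 : ∀ x y z : M, θ (θ x y) (θ (x * y) z) = θ y z) :
    ∀ x : M, (θ x 1 * θ x 1 = θ x 1) ∧
      (∀ y : M, θ (θ x 1) (θ x y) = θ 1 y) ∧
      (∀ y : M, θ (θ 1 x) (θ x y) = θ x y) := by
  intro x
  refine ⟨?_, fun y => ?_, fun y => ?_⟩
  · have h := hP1 x 1 1; simpa using h
  · have h := hP2 x 1 y; simpa using h
  · have h := hP2 1 x y; simpa using h
end

section
/- Let M be a monoid and s(x,y) = (xy, θ_x(y)) a solution of the pentagon equation on M such that every θ_x is bijective. Then θ_x = id_M for every x ∈ M. -/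
theorem stmt_10 {M : Type*} [Monoid M] (θ : M → M → M)
    (hP1 : ∀ x y z : M, θ x y * θ (x * y) z = θ x (y * z))
    (hP2 : ∀ x y z : M, θ (θ x y) (θ (x * y) z) = θ y z)
    (hbij : ∀ x : M, Function.Bijective (θ x)) :
    ∀ x y : M, θ x y = y := by
  -- θ 1 1 = 1
  obtain ⟨z, hz⟩ := (hbij 1).2 1
  have h11 : θ 1 1 = 1 := by
    have := hP1 1 1 z
    simp only [one_mul] at this
    rw [hz] at this
    simpa using this
  -- θ 1 = id
  have h1 : ∀ w : M, θ 1 w = w := by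
    intro w
    have := hP2 1 1 w
    simp only [one_mul, h11] at this
    exact (hbij 1).1 this
  intro x y
  have := hP2 1 x y
  simp only [one_mul, h1] at this
  exact (hbij x).1 this
end

section
/- Let X be a semigroup with central idempotents, e an idempotent, x an element of the group H_e = {y ∈ Xe : ∃ z ∈ Xe, yz = zy = e} with inverse x⁻ in H_e, and s(x,y) = (xy, θ_x(y)) a solution of the pentagon equation on X. Then θ_e(x) lies in H_{θ_e(e)}, and the inverse of θ_e(x) in H_{θ_e(e)} is θ_x(x⁻), i.e., θ_e(x)·θ_x(x⁻) = θ_x(x⁻)·θ_e(x) = θ_e(e). -/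
theorem stmt_11 {X : Type*} [Semigroup X]
    (hcentral : ∀ e : X, e * e = e → ∀ x : X, e * x = x * e)
    (θ : X → X → X)
    (hP1 : ∀ x y z : X, θ x y * θ (x * y) z = θ x (y * z))
    (hP2 : ∀ x y z : X, θ (θ x y) (θ (x * y) z) = θ y z)
    (e x xinv : X) (he : e * e = e)
    (hxe : x * e = x) (hxinve : xinv * e = xinv)
    (hinv1 : x * xinv = e) (hinv2 : xinv * x = e) :
    θ e x * θ e e = θ e x ∧ θ x xinv * θ e e = θ x xinv ∧
    θ e x * θ x xinv = θ e e ∧ θ x xinv * θ e x = θ e e := by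
  have hex : e * x = x := (hcentral e he x).trans hxe
  have hexinv : e * xinv = xinv := (hcentral e he xinv).trans hxinve
  have hva : θ e e * θ e x = θ e x := by
    have h := hP1 e e x; rw [he, hex] at h; exact h
  have hvv : θ e e * θ e e = θ e e := by
    have h := hP1 e e e; rw [he] at h; exact h
  have h3 : θ e x * θ x xinv = θ e e := by
    have h := hP1 e x xinv; rw [hex, hinv1] at h; exact h
  have h2 : θ x xinv * θ e e = θ x xinv := by
    have h := hP1 x xinv e; rw [hinv1, hxinve] at h; exact h
  have h5 : θ x xinv * θ e x = θ x e := by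
    have h := hP1 x xinv x; rw [hinv1, hinv2] at h; exact h
  have huu : θ x e * θ x e = θ x e := by
    have h := hP1 x e e; rw [hxe, he] at h; exact h
  have huw : θ x e * θ x xinv = θ x xinv := by
    have h := hP1 x e xinv; rw [hxe, hexinv] at h; exact h
  have h1 : θ e x * θ e e = θ e x := (hcentral _ hvv (θ e x)).symm.trans hva
  have hwu : θ x xinv * θ x e = θ x xinv := (hcentral _ huu (θ x xinv)).symm.trans huw
  have huv : θ x e * θ e e = θ x e := by
    rw [← h5, mul_assoc, h1, h5]
  have hvu : θ e e * θ x e = θ e e := by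
    rw [← h3, mul_assoc, hwu, h3]
  have hueqv : θ x e = θ e e := by
    rw [← huv, hcentral _ huu (θ e e), hvu]
  exact ⟨h1, h2, h3, h5.trans hueqv⟩
end

section
/- Let M be a monoid and γ : M → M a map. Then s(x,y) = (xy, γ(y)) is an idempotent solution of the pentagon equation on M if and only if γ is a monoid endomorphism with γ² = γ and x·γ(x) = x for every x ∈ M. -/
theorem stmt_13 {M : Type*} [Monoid M] (γ : M → M) :
    (let θ : M → M → M := fun _ y => γ y
     (∀ x y z : M, θ x y * θ (x * y) z = θ x (y * z)) ∧
     (∀ x y z : M, θ (θ x y) (θ (x * y) z) = θ y z) ∧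
     (∀ x y : M, x * y * θ x y = x * y) ∧
     (∀ x y : M, θ (x * y) (θ x y) = θ x y)) ↔
    (γ 1 = 1 ∧ (∀ x y : M, γ (x * y) = γ x * γ y) ∧
      (∀ x : M, γ (γ x) = γ x) ∧ (∀ x : M, x * γ x = x)) := by
  simp only
  constructor
  · rintro ⟨h1, h2, h3, h4⟩
    refine ⟨?_, fun x y => (h1 1 x y).symm, fun x => h4 1 x, fun x => by
      simpa using h3 1 x⟩
    have := h3 1 1
    simpa using this
  · rintro ⟨hone, hmul, hidem, habs⟩
    refine ⟨fun x y z => (hmul y z).symm, fun x y z => hidem z,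
      fun x y => by rw [mul_assoc, habs], fun x y => hidem y⟩
end

section
/- Let X be a semigroup and s(x,y) = (xy, θ_x(y)) an idempotent solution of the pentagon equation on X. Then for all x, y, z ∈ X: (a) θ_{θ_x(y)} = θ_y; (b) θ_y = θ_y ∘ θ_{xy}; (c) θ_x(yz) = θ_x(yz)·θ_y(z). -/
theorem stmt_14 {X : Type*} [Semigroup X] (θ : X → X → X)
    (hP1 : ∀ x y z : X, θ x y * θ (x * y) z = θ x (y * z))
    (hP2 : ∀ x y z : X, θ (θ x y) (θ (x * y) z) = θ y z)
    (hI1 : ∀ x y : X, x * y * θ x y = x * y)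
    (hI2 : ∀ x y : X, θ (x * y) (θ x y) = θ x y) :
    (∀ x y : X, θ (θ x y) = θ y) ∧
    (∀ x y z : X, θ y z = θ y (θ (x * y) z)) ∧
    (∀ x y z : X, θ x (y * z) = θ x (y * z) * θ y z) := by
  have ha : ∀ x y : X, θ (θ x y) = θ y := by
    intro x y
    funext z
    have h := hP2 (x * y) (θ x y) z
    rw [hI2, hI1] at h
    rw [← h, hP2]
  refine ⟨ha, ?_, ?_⟩
  · intro x y z
    conv_rhs => rw [← ha x y]
    rw [hP2]
  · intro x y z
    rw [← hP2 x y z, ← hP1, hI1]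
end

section
/- Let X be a semigroup, e an idempotent of X, and s(x,y) = (xy, θ_x(y)) an idempotent solution of the pentagon equation. If x ∈ X satisfies ex = x, then: (a) θ_e(x) is idempotent; (b) x·θ_e(x) = x; (c) θ_x is an idempotent map, i.e., θ_x ∘ θ_x = θ_x. -/
theorem stmt_15 {X : Type*} [Semigroup X] (θ : X → X → X)
    (hP1 : ∀ x y z : X, θ x y * θ (x * y) z = θ x (y * z))
    (hP2 : ∀ x y z : X, θ (θ x y) (θ (x * y) z) = θ y z)
    (hI1 : ∀ x y : X, x * y * θ x y = x * y)
    (hI2 : ∀ x y : X, θ (x * y) (θ x y) = θ x y)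
    (e x : X) (he : e * e = e) (hx : e * x = x) :
    (θ e x * θ e x = θ e x) ∧ (x * θ e x = x) ∧
    (∀ y : X, θ x (θ x y) = θ x y) := by
  have hb : x * θ e x = x := by
    have := hI1 e x
    rwa [hx] at this
  have hfix : θ x (θ e x) = θ e x := by
    have := hI2 e x
    rwa [hx] at this
  have ha : θ e x * θ e x = θ e x := by
    have := hP1 e x (θ e x)
    rw [hx, hfix, hb] at this
    exact this
  -- hP2 with e, x: θ (θ e x) (θ x z) = θ x z
  have h1 : ∀ z, θ (θ e x) (θ x z) = θ x z := by
    intro z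
    have := hP2 e x z
    rwa [hx] at this
  -- hP2 with x, θ e x: θ (θ e x) (θ x z) = θ (θ e x) z
  have h2 : ∀ z, θ (θ e x) z = θ x z := by
    intro z
    have := hP2 x (θ e x) z
    rw [hfix, hb] at this
    rw [← this, h1]
  refine ⟨ha, hb, fun y => ?_⟩
  rw [← h2 (θ x y), h1]
end

section
/- Let M be a monoid with identity 1 and s(x,y) = (xy, θ_x(y)) an idempotent solution of the pentagon equation on M. Then for every x ∈ M: (a) θ_1(1) = 1; (b) θ_x = θ_{θ_1(x)}; (c) θ_x(1)·θ_1(x) = θ_1(x)·θ_x(1) = θ_1(x) (i.e., θ_1(x) ≤ θ_x(1) in the order on idempotents). -/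
theorem stmt_17 {M : Type*} [Monoid M] (θ : M → M → M)
    (hP1 : ∀ x y z : M, θ x y * θ (x * y) z = θ x (y * z))
    (hP2 : ∀ x y z : M, θ (θ x y) (θ (x * y) z) = θ y z)
    (hI1 : ∀ x y : M, x * y * θ x y = x * y)
    (hI2 : ∀ x y : M, θ (x * y) (θ x y) = θ x y) :
    θ 1 1 = 1 ∧ (∀ x : M, θ x = θ (θ 1 x)) ∧
    (∀ x : M, θ x 1 * θ 1 x = θ 1 x ∧ θ 1 x * θ x 1 = θ 1 x) := by
  have ha : θ 1 1 = 1 := by have := hI1 1 1; simpa using this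
  have hx1 : ∀ x : M, x * θ 1 x = x := by
    intro x; have := hI1 1 x; simpa using this
  have hfix : ∀ x : M, θ x (θ 1 x) = θ 1 x := by
    intro x; have := hI2 1 x; simpa using this
  have hb : ∀ x : M, θ x = θ (θ 1 x) := by
    intro x
    funext z
    have h1 : θ (θ 1 x) (θ x z) = θ x z := by
      have := hP2 1 x z; simpa using this
    have h2 : θ (θ 1 x) (θ x z) = θ (θ 1 x) z := by
      have := hP2 x (θ 1 x) z
      rwa [hfix, hx1] at this
    rw [← h2, h1]
  refine ⟨ha, hb, fun x => ⟨?_, ?_⟩⟩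
  · have := hP1 x 1 (θ 1 x)
    simp only [mul_one, one_mul] at this
    rw [hfix] at this
    exact this
  · have := hP1 1 x 1
    simpa using this
end

section
/- Let M be a monoid and s(x,y) = (xy, θ_x(y)) an idempotent solution of the pentagon equation on M. If r ∈ M is a right unit, i.e., there exists r' ∈ M with rr' = 1, then θ_r(r') = 1, θ_1(r) = 1, and θ_r = θ_1. -/
theorem stmt_18 {M : Type*} [Monoid M] (θ : M → M → M)
    (hP1 : ∀ x y z : M, θ x y * θ (x * y) z = θ x (y * z))
    (hP2 : ∀ x y z : M, θ (θ x y) (θ (x * y) z) = θ y z)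
    (hI1 : ∀ x y : M, x * y * θ x y = x * y)
    (hI2 : ∀ x y : M, θ (x * y) (θ x y) = θ x y)
    (r r' : M) (hr : r * r' = 1) :
    θ r r' = 1 ∧ θ 1 r = 1 ∧ θ r = θ 1 := by
  -- θ 1 1 = 1
  have h11 : θ 1 1 = 1 := by have := hI1 1 1; simpa using this
  -- θ r r' = 1
  have hrr' : θ r r' = 1 := by have := hI1 r r'; rw [hr] at this; simpa using this
  -- θ 1 r = 1
  have h1r : θ 1 r = 1 := by
    have := hP1 1 r r'
    rw [one_mul, hrr', hr, h11, mul_one] at this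
    exact this
  -- θ r 1 = 1
  have hr1 : θ r 1 = 1 := by
    have := hP1 1 r 1
    rw [one_mul, h1r, one_mul, mul_one, h1r] at this
    exact this
  refine ⟨hrr', h1r, ?_⟩
  funext z
  have h5 : θ 1 (θ r z) = θ r z := by
    have := hP2 1 r z
    rwa [h1r, one_mul] at this
  have h6 : θ 1 (θ r z) = θ 1 z := by
    have := hP2 r 1 z
    rwa [hr1, mul_one] at this
  rw [← h5, h6]
end

section
/- Let M be a monoid whose idempotents are central (every idempotent commutes with all elements of M) and let s(x,y) = (xy, θ_x(y)) be an idempotent solution of the pentagon equation on M. Then θ_1 is an idempotent monoid homomorphism from M to M whose image consists of idempotents: θ_1(1) = 1, θ_1(xy) = θ_1(x)θ_1(y), θ_1 ∘ θ_1 = θ_1, and θ_1(x) is idempotent for all x,y ∈ M. -/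
theorem stmt_19 {M : Type*} [Monoid M]
    (hcentral : ∀ e : M, e * e = e → ∀ x : M, e * x = x * e)
    (θ : M → M → M)
    (hP1 : ∀ x y z : M, θ x y * θ (x * y) z = θ x (y * z))
    (hP2 : ∀ x y z : M, θ (θ x y) (θ (x * y) z) = θ y z)
    (hI1 : ∀ x y : M, x * y * θ x y = x * y)
    (hI2 : ∀ x y : M, θ (x * y) (θ x y) = θ x y) :
    θ 1 1 = 1 ∧ (∀ x y : M, θ 1 (x * y) = θ 1 x * θ 1 y) ∧
    (∀ x : M, θ 1 (θ 1 x) = θ 1 x) ∧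
    (∀ x : M, θ 1 x * θ 1 x = θ 1 x) := by
  have habs : ∀ z : M, z * θ 1 z = z := by
    intro z; have := hI1 1 z; simpa using this
  have h11 : θ 1 1 = 1 := by
    have := hI1 1 1; simpa using this
  have hfix : ∀ z : M, θ 1 (θ 1 z) = θ 1 z := by
    intro z; have := hP2 1 1 z; simpa [h11] using this
  have hxe : ∀ x : M, θ x (θ 1 x) = θ 1 x := by
    intro x; have := hI2 1 x; simpa using this
  have hidem : ∀ x : M, θ 1 x * θ 1 x = θ 1 x := by
    intro x
    have h1 := hP1 1 x (θ 1 x)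
    rw [one_mul, habs x, hxe x] at h1
    exact h1
  have hD : ∀ x c : M, θ (θ 1 x) c = θ x c := by
    intro x c
    have h2 := hP2 x (θ 1 x) c
    rw [hxe x, habs x] at h2
    have h3 := hP2 1 x c
    rw [one_mul] at h3
    rw [h3] at h2
    exact h2.symm
  refine ⟨h11, ?_, hfix, hidem⟩
  intro x y
  have hec : ∀ z : M, θ 1 x * z = z * θ 1 x := hcentral _ (hidem x)
  have hgc : ∀ z : M, θ 1 y * z = z * θ 1 y := hcentral _ (hidem y)
  -- θ 1 (x*y) = θ 1 x * θ x y
  have h9 : θ 1 (x * y) = θ 1 x * θ x y := by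
    have := hP1 1 x y; rw [one_mul] at this; exact this.symm
  -- θ x y * θ 1 y = θ x y
  have hft : θ x 1 * θ x y = θ x y := by
    have := hP1 x 1 y; rw [mul_one, one_mul] at this; exact this
  have hfg : θ (θ x 1) (θ x y) = θ 1 y := by
    have := hP2 x 1 y; rw [mul_one] at this; exact this
  have htg : θ x y * θ 1 y = θ x y := by
    have := hI1 (θ x 1) (θ x y)
    rw [hft, hfg] at this
    exact this
  -- θ 1 (θ 1 x * y) = θ 1 x * θ x y
  have h4 : θ 1 (θ 1 x * y) = θ 1 x * θ x y := by
    have := hP1 1 (θ 1 x) y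
    rw [one_mul, hfix x, hD x y] at this
    exact this.symm
  -- θ 1 (y * θ 1 x) = θ 1 y * θ (θ 1 y) (θ 1 x)
  have h5 : θ 1 (y * θ 1 x) = θ 1 y * θ (θ 1 y) (θ 1 x) := by
    have := hP1 1 y (θ 1 x)
    rw [one_mul, ← hD y (θ 1 x)] at this
    exact this.symm
  -- θ 1 (θ 1 y * θ 1 x) = θ 1 y * θ (θ 1 y) (θ 1 x)
  have h6 : θ 1 (θ 1 y * θ 1 x) = θ 1 y * θ (θ 1 y) (θ 1 x) := by
    have := hP1 1 (θ 1 y) (θ 1 x)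
    rw [one_mul, hfix y] at this
    exact this.symm
  -- chain: θ 1 (θ 1 x * θ 1 y) = θ 1 (x * y)
  have hkey : θ 1 (θ 1 x * θ 1 y) = θ 1 (x * y) := by
    rw [hgc (θ 1 x)] at h6
    rw [h6, ← h5, ← hec y, h4, h9]
  -- absorption: (e*g) * θ 1 (e*g) = e*g
  have habs2 := habs (θ 1 x * θ 1 y)
  rw [hkey] at habs2
  -- collapse: (e*g) * θ 1 (x*y) = θ 1 (x*y)
  have hcollapse : (θ 1 x * θ 1 y) * θ 1 (x * y) = θ 1 (x * y) := by
    rw [h9]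
    calc θ 1 x * θ 1 y * (θ 1 x * θ x y)
        = θ 1 x * (θ 1 y * θ 1 x) * θ x y := by rw [mul_assoc, mul_assoc, mul_assoc]
      _ = θ 1 x * (θ 1 x * θ 1 y) * θ x y := by rw [hgc (θ 1 x)]
      _ = (θ 1 x * θ 1 x) * (θ 1 y * θ x y) := by rw [mul_assoc, mul_assoc, mul_assoc]
      _ = θ 1 x * (θ x y * θ 1 y) := by rw [hidem x, hgc (θ x y)]
      _ = θ 1 x * θ x y := by rw [htg]
  rw [← habs2, hcollapse]
end
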